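/- Let g : [0, ∞) → (0, ∞) be differentiable with g' ≤ 0, let α ∈ (0, 1), and set h_α(s) = α g(s) − g'(s) and C_α = ∫₀^∞ g(s)²/h_α(s) ds. Then for any t > 0 and any continuous function v : [0, t] → ℝ, (∫₀^t g(t−s) v(s) ds)² ≤ C_α · ∫₀^t h_α(t−s) v(s)² ds. -/

import Mathlib

open Set MeasureTheory

/-!
After the substitution `u = t - s`, write `g u * v (t - u)` as the product of `g u / √(h_α u)`
and `√(h_α u) * v (t - u)`, which is legitimate because `h_α = α g - g' > 0` on `[0, ∞)`, and
apply the Cauchy–Schwarz inequality on `[0, t]`. The first factor contributes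
`∫₀^t g² / h_α ≤ C_α`; the second is square integrable because `g' ≤ 0` forces `g'` to be
integrable on `[0, t]`.
-/

theorem sq_integral_mul_le_integral_sq_mul_integral_sq {α : Type*} [MeasurableSpace α]
    {μ : Measure α} {f g : α → ℝ} (hf : MemLp f 2 μ) (hg : MemLp g 2 μ) :
    (∫ x, f x * g x ∂μ) ^ 2 ≤ (∫ x, f x ^ 2 ∂μ) * ∫ x, g x ^ 2 ∂μ := by
  have holder := integral_mul_norm_le_Lp_mul_Lq Real.HolderConjugate.two_two
    (by simpa using hf) (by simpa using hg)
  simp only [Real.norm_eq_abs, Real.rpow_two, sq_abs, ← Real.sqrt_eq_rpow] at holder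
  have hA : 0 ≤ ∫ x, f x ^ 2 ∂μ := integral_nonneg fun x => sq_nonneg _
  have hB : 0 ≤ ∫ x, g x ^ 2 ∂μ := integral_nonneg fun x => sq_nonneg _
  calc (∫ x, f x * g x ∂μ) ^ 2 = |∫ x, f x * g x ∂μ| ^ 2 := (sq_abs _).symm
    _ ≤ (∫ x, |f x| * |g x| ∂μ) ^ 2 := by
        gcongr
        simpa only [abs_mul] using abs_integral_le_integral_abs (f := fun x => f x * g x)
    _ ≤ (√(∫ x, f x ^ 2 ∂μ) * √(∫ x, g x ^ 2 ∂μ)) ^ 2 := by gcongr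
    _ = (∫ x, f x ^ 2 ∂μ) * ∫ x, g x ^ 2 ∂μ := by
        rw [mul_pow, Real.sq_sqrt hA, Real.sq_sqrt hB]

theorem sq_integral_mul_le_weighted {α : Type*} [MeasurableSpace α] {μ : Measure α}
    {f v w : α → ℝ} (hw : ∀ᵐ x ∂μ, 0 < w x) (hf : AEStronglyMeasurable f μ)
    (hv : AEStronglyMeasurable v μ) (hw_meas : AEStronglyMeasurable w μ)
    (hfw : Integrable (fun x => f x ^ 2 / w x) μ) (hwv : Integrable (fun x => w x * v x ^ 2) μ) :
    (∫ x, f x * v x ∂μ) ^ 2 ≤ (∫ x, f x ^ 2 / w x ∂μ) * ∫ x, w x * v x ^ 2 ∂μ := by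
  have hsqrt : AEStronglyMeasurable (fun x => √(w x)) μ :=
    Real.continuous_sqrt.comp_aestronglyMeasurable hw_meas
  have hF : MemLp (fun x => f x / √(w x)) 2 μ := by
    have hmeas := (hf.aemeasurable.div hsqrt.aemeasurable).aestronglyMeasurable
    refine (memLp_two_iff_integrable_sq hmeas).2 (hfw.congr ?_)
    filter_upwards [hw] with x hx
    rw [Pi.div_apply, div_pow, Real.sq_sqrt hx.le]
  have hG : MemLp (fun x => √(w x) * v x) 2 μ := by
    refine (memLp_two_iff_integrable_sq (hsqrt.mul hv)).2 (hwv.congr ?_)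
    filter_upwards [hw] with x hx
    rw [Pi.mul_apply, mul_pow, Real.sq_sqrt hx.le]
  have hfv : ∫ x, f x * v x ∂μ = ∫ x, f x / √(w x) * (√(w x) * v x) ∂μ :=
    integral_congr_ae <| hw.mono fun x hx => by field_simp
  have hfw' : ∫ x, f x ^ 2 / w x ∂μ = ∫ x, (f x / √(w x)) ^ 2 ∂μ :=
    integral_congr_ae <| hw.mono fun x hx => by simp only [div_pow, Real.sq_sqrt hx.le]
  have hwv' : ∫ x, w x * v x ^ 2 ∂μ = ∫ x, (√(w x) * v x) ^ 2 ∂μ :=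
    integral_congr_ae <| hw.mono fun x hx => by simp only [mul_pow, Real.sq_sqrt hx.le]
  rw [hfv, hfw', hwv']
  exact sq_integral_mul_le_integral_sq_mul_integral_sq hF hG

theorem integrableOn_deriv_of_nonpos {g g' : ℝ → ℝ} {a b : ℝ} (hcont : ContinuousOn g (Icc a b))
    (hderiv : ∀ x ∈ Ioo a b, HasDerivAt g (g' x) x) (hg' : ∀ x ∈ Ioo a b, g' x ≤ 0) :
    IntegrableOn g' (Ioc a b) := by
  simpa using (intervalIntegral.integrableOn_deriv_of_nonneg hcont.neg
    (fun x hx => (hderiv x hx).neg) fun x hx => neg_nonneg.2 (hg' x hx)).neg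

theorem sq_integral_Ioc_mul_le_of_deriv_nonpos {g w : ℝ → ℝ} {α t : ℝ} (hα : 0 < α)
    (hgpos : ∀ s, 0 ≤ s → 0 < g s) (hgdiff : ∀ s, 0 ≤ s → DifferentiableAt ℝ g s)
    (hg' : ∀ s, 0 ≤ s → deriv g s ≤ 0)
    (hα_int : IntegrableOn (fun s => g s ^ 2 / (α * g s - deriv g s)) (Ici 0))
    (hw : ContinuousOn w (Icc 0 t)) :
    (∫ u in Ioc 0 t, g u * w u) ^ 2 ≤
      (∫ s in Ici 0, g s ^ 2 / (α * g s - deriv g s)) *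
        ∫ u in Ioc 0 t, (α * g u - deriv g u) * w u ^ 2 := by
  have hh_pos : ∀ s, 0 ≤ s → 0 < α * g s - deriv g s := fun s hs => by
    nlinarith [mul_pos hα (hgpos s hs), hg' s hs]
  have hg_cont : ContinuousOn g (Icc 0 t) := fun s hs =>
    (hgdiff s hs.1).continuousAt.continuousWithinAt
  have hh_int : IntegrableOn (fun s => α * g s - deriv g s) (Icc 0 t) :=
    (integrableOn_Icc_iff_integrableOn_Ioc).2 <|
      ((hg_cont.integrableOn_Icc.mono_set Ioc_subset_Icc_self).const_mul α).sub
        (integrableOn_deriv_of_nonpos hg_cont (fun x hx => (hgdiff x hx.1.le).hasDerivAt)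
          fun x hx => hg' x hx.1.le)
  have hIoc : ∀ᵐ u ∂volume.restrict (Ioc 0 t), u ∈ Icc 0 t :=
    (ae_restrict_mem measurableSet_Ioc).mono fun u hu => Ioc_subset_Icc_self hu
  have hIoc_Ici : Ioc 0 t ⊆ Ici (0 : ℝ) := Ioc_subset_Ioi_self.trans Ioi_subset_Ici_self
  calc (∫ u in Ioc 0 t, g u * w u) ^ 2
      ≤ (∫ u in Ioc 0 t, g u ^ 2 / (α * g u - deriv g u)) *
          ∫ u in Ioc 0 t, (α * g u - deriv g u) * w u ^ 2 :=
        sq_integral_mul_le_weighted (hIoc.mono fun u hu => hh_pos u hu.1)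
          ((hg_cont.mono Ioc_subset_Icc_self).aestronglyMeasurable measurableSet_Ioc)
          ((hw.mono Ioc_subset_Icc_self).aestronglyMeasurable measurableSet_Ioc)
          (hh_int.mono_set Ioc_subset_Icc_self).aestronglyMeasurable
          (hα_int.mono_set hIoc_Ici)
          ((hh_int.mul_continuousOn (hw.pow 2) isCompact_Icc).mono_set Ioc_subset_Icc_self)
    _ ≤ _ := by
        refine mul_le_mul_of_nonneg_right (setIntegral_mono_set hα_int ?_ hIoc_Ici.eventuallyLE) ?_
        · exact (ae_restrict_mem measurableSet_Ici).mono fun u hu =>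
            div_nonneg (sq_nonneg _) (hh_pos u hu).le
        · exact setIntegral_nonneg_of_ae_restrict (hIoc.mono fun u hu =>
            mul_nonneg (hh_pos u hu.1).le (sq_nonneg _))

/-- Weighted Cauchy–Schwarz estimate: for g positive differentiable
non-increasing, α ∈ (0,1), h_α = αg − g', C_α = ∫₀^∞ g²/h_α (finite), and v
continuous on [0,t],
(∫₀^t g(t−s)v(s) ds)² ≤ C_α ∫₀^t h_α(t−s)v(s)² ds. -/
theorem stmt5 (g : ℝ → ℝ) (α : ℝ) (hα : α ∈ Ioo (0 : ℝ) 1)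
    (hgpos : ∀ s : ℝ, 0 ≤ s → 0 < g s)
    (hgdiff : ∀ s : ℝ, 0 ≤ s → DifferentiableAt ℝ g s)
    (hg' : ∀ s : ℝ, 0 ≤ s → deriv g s ≤ 0)
    (hα_int : IntegrableOn (fun s => (g s) ^ 2 / (α * g s - deriv g s)) (Ici 0))
    (t : ℝ) (ht : 0 < t) (v : ℝ → ℝ) (hv : ContinuousOn v (Icc 0 t)) :
    (∫ s in (0 : ℝ)..t, g (t - s) * v s) ^ 2 ≤
      (∫ s in Ici (0 : ℝ), (g s) ^ 2 / (α * g s - deriv g s)) *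
        ∫ s in (0 : ℝ)..t, (α * g (t - s) - deriv g (t - s)) * (v s) ^ 2 := by
  have hreflect : ∀ F : ℝ → ℝ → ℝ,
      ∫ s in (0 : ℝ)..t, F (t - s) (v s) = ∫ u in (0 : ℝ)..t, F u (v (t - u)) := fun F => by
    simpa using intervalIntegral.integral_comp_sub_left (fun u => F u (v (t - u))) t
      (a := 0) (b := t)
  rw [hreflect (fun u x => g u * x), hreflect (fun u x => (α * g u - deriv g u) * x ^ 2),
    intervalIntegral.integral_of_le ht.le, intervalIntegral.integral_of_le ht.le]
  exact sq_integral_Ioc_mul_le_of_deriv_nonpos hα.1 hgpos hgdiff hg' hα_int <|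
    hv.comp (by fun_prop) fun u hu => ⟨by linarith [hu.2], by linarith [hu.1]⟩
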